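/- arXiv:2605.07532 — 3 statements merged into one kernel-verified Lean document; each statement's English description precedes it below -/
import Mathlib

section
/- Let 0 < h ≤ 1, I = [t₁, t₂] ⊂ ℝ, and f ∈ H¹(ℝ) with Fourier support in [-π/h, π/h]. Then sup_{t∈I} ‖(e^{-6h^{-2}t(∂_h - ∂_x)} - e^{-t∂_x³}) f‖_{L²(ℝ)} ≤ C max(|t₁|, |t₂|)^{1/5} h^{2/5} ‖f‖_{H¹(ℝ)}, where e^{-6h^{-2}t(∂_h - ∂_x)} is the Fourier multiplier with symbol e^{-6ih^{-3}t(sin(hξ)-hξ)} and e^{-t∂_x³} has symbol e^{itξ³}. -/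
/-!
On the Fourier side both propagators are unimodular multipliers, and their phases differ by
`6 t h⁻³ (sin (hξ) - hξ + (hξ)³ / 6)`, which the quintic Taylor bound for the sine controls by
`|t| h² |ξ|⁵`. Interpolating with the trivial bound `2` gives
`min 2 (|t| h² |ξ|⁵) ≤ 2 (|t| h²)^{1/5} |ξ|`, so the difference of the multipliers is bounded by
`2 max(|t₁|, |t₂|)^{1/5} h^{2/5} |ξ|`; integrating against `‖F‖²` gives the estimate with `C = 2`.
-/

open Real MeasureTheory

theorem Real.cos_le_one_sub_sq_div_two_add_quartic (x : ℝ) :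
    cos x ≤ 1 - x ^ 2 / 2 + x ^ 4 / 24 := by
  wlog hx : 0 ≤ x
  · simpa [Even.neg_pow (by decide : Even 4)] using this (-x) (by linarith)
  let f (t : ℝ) : ℝ := 1 - t ^ 2 / 2 + t ^ 4 / 24 - cos t
  have hmono : MonotoneOn f (Set.Ici 0) := by
    apply monotoneOn_of_deriv_nonneg (convex_Ici 0) (by fun_prop) (by fun_prop)
    intro t ht
    rw [interior_Ici] at ht
    have : deriv f t = sin t - (t - t ^ 3 / 6) := by
      simp (disch := fun_prop) only [f, deriv_fun_sub, deriv_fun_add, deriv_const',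
        deriv_div_const, deriv_fun_pow, deriv_id'', deriv_cos']
      ring
    rw [this, sub_nonneg]
    exact sin_ge_sub_cube (le_of_lt ht)
  simpa [f] using hmono (by simp) hx hx

theorem Real.sin_le_sub_cube_add_quintic {x : ℝ} (hx : 0 ≤ x) :
    sin x ≤ x - x ^ 3 / 6 + x ^ 5 / 120 := by
  let f (t : ℝ) : ℝ := t - t ^ 3 / 6 + t ^ 5 / 120 - sin t
  have hmono : MonotoneOn f (Set.Ici 0) := by
    apply monotoneOn_of_deriv_nonneg (convex_Ici 0) (by fun_prop) (by fun_prop)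
    intro t ht
    rw [interior_Ici] at ht
    have : deriv f t = 1 - t ^ 2 / 2 + t ^ 4 / 24 - cos t := by
      simp (disch := fun_prop) only [f, deriv_fun_sub, deriv_fun_add, deriv_id'',
        deriv_div_const, deriv_fun_pow, deriv_sin]
      ring
    rw [this, sub_nonneg]
    exact cos_le_one_sub_sq_div_two_add_quartic _
  simpa [f] using hmono (by simp) hx hx

theorem Real.abs_sin_sub_taylor_le (x : ℝ) : |sin x - x + x ^ 3 / 6| ≤ |x| ^ 5 / 120 := by
  wlog hx : 0 ≤ x
  · have := this (-x) (by linarith)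
    rwa [sin_neg, abs_neg, ← abs_neg,
      show -(-sin x - -x + (-x) ^ 3 / 6) = sin x - x + x ^ 3 / 6 by ring] at this
  rw [abs_of_nonneg hx, abs_le]
  constructor
  · nlinarith [sin_ge_sub_cube hx, pow_nonneg hx 5]
  · linarith [sin_le_sub_cube_add_quintic hx]

theorem Complex.norm_exp_I_mul_ofReal_sub_exp_I_mul_ofReal_le (a b : ℝ) :
    ‖exp (I * a) - exp (I * b)‖ ≤ min 2 |a - b| := by
  have hexp (x : ℝ) : ‖exp (I * x)‖ = 1 := by simp
  refine le_min ?_ ?_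
  · calc ‖exp (I * a) - exp (I * b)‖ ≤ ‖exp (I * a)‖ + ‖exp (I * b)‖ := norm_sub_le _ _
      _ = 2 := by rw [hexp, hexp]; norm_num
  · have : exp (I * a) - exp (I * b) = exp (I * b) * (exp (I * ↑(a - b)) - 1) := by
      rw [mul_sub, ← exp_add]; push_cast; ring_nf
    rw [this, norm_mul, hexp, one_mul, ← Real.norm_eq_abs]
    exact norm_exp_I_mul_ofReal_sub_one_le

theorem min_one_mul_pow_le_rpow_mul {c x : ℝ} {n : ℕ} (hc : 0 ≤ c) (hx : 0 ≤ x) (hn : n ≠ 0) :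
    min 1 (c * x ^ n) ≤ c ^ (1 / n : ℝ) * x := by
  set y := c ^ (1 / n : ℝ) * x
  have hy : 0 ≤ y := by positivity
  have hyn : y ^ n = c * x ^ n := by
    rw [mul_pow, ← rpow_natCast, ← rpow_mul hc, one_div_mul_cancel (by exact_mod_cast hn), rpow_one]
  rcases le_or_gt 1 y with h1 | h1
  · exact (min_le_left _ _).trans h1
  · exact (min_le_right _ _).trans (hyn ▸ pow_le_of_le_one hy h1.le hn)

theorem abs_toda_phase_sub_airy_phase_le {h : ℝ} (hh : 0 < h) (t ξ : ℝ) :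
    |-6 * (t / h ^ 3) * (sin (h * ξ) - h * ξ) - t * ξ ^ 3| ≤ |t| * h ^ 2 * |ξ| ^ 5 := by
  have hsplit : -6 * (t / h ^ 3) * (sin (h * ξ) - h * ξ) - t * ξ ^ 3
      = -6 * (t / h ^ 3) * (sin (h * ξ) - h * ξ + (h * ξ) ^ 3 / 6) := by
    field_simp; ring
  calc |-6 * (t / h ^ 3) * (sin (h * ξ) - h * ξ) - t * ξ ^ 3|
      = 6 * (|t| / h ^ 3) * |sin (h * ξ) - h * ξ + (h * ξ) ^ 3 / 6| := by
        rw [hsplit, abs_mul, abs_mul, abs_div, abs_of_pos (pow_pos hh 3)]; norm_num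
    _ ≤ 6 * (|t| / h ^ 3) * (|h * ξ| ^ 5 / 120) := by gcongr; exact abs_sin_sub_taylor_le _
    _ = |t| * h ^ 2 * |ξ| ^ 5 / 20 := by
        rw [abs_mul, abs_of_pos hh]; field_simp; ring
    _ ≤ |t| * h ^ 2 * |ξ| ^ 5 := by linarith [show 0 ≤ |t| * h ^ 2 * |ξ| ^ 5 by positivity]

theorem norm_toda_multiplier_sub_airy_multiplier_le {h : ℝ} (hh : 0 < h) (t ξ : ℝ) :
    ‖Complex.exp (-6 * Complex.I * ((t / h ^ 3 : ℝ) : ℂ) * ((sin (h * ξ) - h * ξ : ℝ) : ℂ))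
        - Complex.exp (Complex.I * (t : ℂ) * (ξ : ℂ) ^ 3)‖
      ≤ 2 * (|t| * h ^ 2) ^ (1 / 5 : ℝ) * |ξ| := by
  have hphases := Complex.norm_exp_I_mul_ofReal_sub_exp_I_mul_ofReal_le
    (-6 * (t / h ^ 3) * (sin (h * ξ) - h * ξ)) (t * ξ ^ 3)
  calc _ ≤ min 2 |-6 * (t / h ^ 3) * (sin (h * ξ) - h * ξ) - t * ξ ^ 3| := by
        convert hphases using 4 <;> push_cast <;> ring
    _ ≤ min 2 (2 * (|t| * h ^ 2 * |ξ| ^ 5)) := by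
        gcongr
        linarith [abs_toda_phase_sub_airy_phase_le hh t ξ,
          show 0 ≤ |t| * h ^ 2 * |ξ| ^ 5 by positivity]
    _ = 2 * min 1 (|t| * h ^ 2 * |ξ| ^ 5) := by rw [mul_min_of_nonneg _ _ zero_le_two, mul_one]
    _ ≤ 2 * ((|t| * h ^ 2) ^ (1 / 5 : ℝ) * |ξ|) := by
        gcongr
        exact_mod_cast min_one_mul_pow_le_rpow_mul (by positivity) (abs_nonneg ξ)
          (by norm_num : 5 ≠ 0)
    _ = _ := by ring

theorem sqrt_integral_norm_mul_sq_le {μ : Measure ℝ} {m F : ℝ → ℂ} {D : ℝ} (hD : 0 ≤ D)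
    (hm : ∀ ξ, ‖m ξ‖ ≤ D * |ξ|) (hF : Integrable (fun ξ => (1 + ξ ^ 2) * ‖F ξ‖ ^ 2) μ) :
    √(∫ ξ, ‖m ξ * F ξ‖ ^ 2 ∂μ) ≤ D * √(∫ ξ, (1 + ξ ^ 2) * ‖F ξ‖ ^ 2 ∂μ) := by
  have hpointwise (ξ : ℝ) : ‖m ξ * F ξ‖ ^ 2 ≤ D ^ 2 * ((1 + ξ ^ 2) * ‖F ξ‖ ^ 2) := by
    rw [norm_mul, mul_pow, ← mul_assoc]
    gcongr
    calc ‖m ξ‖ ^ 2 ≤ (D * |ξ|) ^ 2 := by gcongr; exact hm ξ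
      _ ≤ D ^ 2 * (1 + ξ ^ 2) := by rw [mul_pow, sq_abs]; gcongr; linarith
  calc √(∫ ξ, ‖m ξ * F ξ‖ ^ 2 ∂μ) ≤ √(∫ ξ, D ^ 2 * ((1 + ξ ^ 2) * ‖F ξ‖ ^ 2) ∂μ) :=
        sqrt_le_sqrt (integral_mono_of_nonneg (.of_forall fun ξ => by positivity)
          (hF.const_mul _) (.of_forall hpointwise))
    _ = D * √(∫ ξ, (1 + ξ ^ 2) * ‖F ξ‖ ^ 2 ∂μ) := by
        rw [integral_const_mul, sqrt_mul (sq_nonneg D), sqrt_sq hD]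

/-- Convergence of the Toda linear propagator to the Airy flow on band-limited data,
    on the Fourier side: for F = f̂ supported in [-π/h, π/h], uniformly on [t₁,t₂],
    the L² difference of the two flows is ≤ C max(|t₁|,|t₂|)^{1/5} h^{2/5} ‖f‖_{H¹}. -/
theorem stmt9 : ∃ C > 0, ∀ (h : ℝ), 0 < h → h ≤ 1 →
    ∀ (t₁ t₂ : ℝ) (F : ℝ → ℂ),
      Function.support F ⊆ Set.Icc (-(π / h)) (π / h) →
      Integrable (fun ξ => (1 + ξ ^ 2) * ‖F ξ‖ ^ 2) →
      ∀ t ∈ Set.Icc t₁ t₂,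
        Real.sqrt (∫ ξ : ℝ,
            ‖(Complex.exp (-6 * Complex.I * ((t / h ^ 3 : ℝ) : ℂ) *
                  ((Real.sin (h * ξ) - h * ξ : ℝ) : ℂ))
              - Complex.exp (Complex.I * (t : ℂ) * (ξ : ℂ) ^ 3)) * F ξ‖ ^ 2)
          ≤ C * (max |t₁| |t₂|) ^ ((1 : ℝ) / 5) * h ^ ((2 : ℝ) / 5) *
            Real.sqrt (∫ ξ : ℝ, (1 + ξ ^ 2) * ‖F ξ‖ ^ 2) := by
  refine ⟨2, two_pos, fun h hh _ t₁ t₂ F _ hF t ht => ?_⟩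
  set M := max |t₁| |t₂|
  have htM : |t| ≤ M := abs_le_max_abs_abs ht.1 ht.2
  have hscale : (|t| * h ^ 2) ^ (1 / 5 : ℝ) ≤ M ^ (1 / 5 : ℝ) * h ^ (2 / 5 : ℝ) := by
    rw [mul_rpow (abs_nonneg t) (by positivity), ← rpow_natCast, ← rpow_mul hh.le, Nat.cast_ofNat,
      show (2 : ℝ) * (1 / 5) = 2 / 5 by norm_num]
    gcongr
  refine sqrt_integral_norm_mul_sq_le (by positivity) (fun ξ => ?_) hF
  calc _ ≤ 2 * (|t| * h ^ 2) ^ (1 / 5 : ℝ) * |ξ| :=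
        norm_toda_multiplier_sub_airy_multiplier_le hh t ξ
    _ ≤ 2 * M ^ (1 / 5 : ℝ) * h ^ (2 / 5 : ℝ) * |ξ| := by
        rw [mul_assoc 2 (M ^ _)]; gcongr
end

section
/- For every θ ∈ [0,1], every h with 0 < h ≤ 1, and every ξ ∈ [-π/h, π/h), the derivative of the phase φ(ξ) = -6θh^{-3}(sin(hξ) - hξ) + (1-θ)ξ³ satisfies φ'(ξ) = 12θh^{-2}sin²(hξ/2) + 3(1-θ)ξ² ≥ (12/π²) ξ². -/
open Real

/-! The derivative is computed from `cos y - 1 = -2 sin² (y / 2)`. On the range `|hξ| ≤ π`,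
Jordan's inequality `sin x ≥ 2x/π` on `[0, π/2]`, applied at `x = |hξ|/2`, gives
`sin² (hξ/2) ≥ (hξ)²/π²`, which bounds the Toda part by `12θξ²/π²`; the Airy part
`3(1-θ)ξ²` dominates `12(1-θ)ξ²/π²` because `π² ≥ 4`. -/

lemma Real.cos_sub_one_eq_neg_two_mul_sin_half_sq (x : ℝ) :
    cos x - 1 = -2 * sin (x / 2) ^ 2 := by
  rw [sin_sq_eq_half_sub, mul_div_cancel₀ x two_ne_zero]
  ring

lemma Real.hasDerivAt_sin_mul_sub_mul (h x : ℝ) :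
    HasDerivAt (fun y : ℝ => sin (h * y) - h * y) (-2 * h * sin (h * x / 2) ^ 2) x := by
  have hlin : HasDerivAt (fun y : ℝ => h * y) h x := by
    simpa using (hasDerivAt_id x).const_mul h
  refine (hlin.sin.sub hlin).congr_deriv ?_
  rw [← sub_one_mul, cos_sub_one_eq_neg_two_mul_sin_half_sq]
  ring

lemma Real.sq_div_pi_sq_le_sin_half_sq {x : ℝ} (hx : |x| ≤ π) :
    x ^ 2 / π ^ 2 ≤ sin (x / 2) ^ 2 := by
  have jordan : 2 / π * (|x| / 2) ≤ sin (|x| / 2) :=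
    mul_le_sin (by positivity) (by linarith)
  have habs : |sin (x / 2)| = sin (|x| / 2) := by
    have hx2 : |x / 2| ≤ π := by rw [abs_div, abs_two]; linarith [pi_pos]
    rw [abs_sin_eq_sin_abs_of_abs_le_pi hx2, abs_div, abs_two]
  calc x ^ 2 / π ^ 2 = (2 / π * (|x| / 2)) ^ 2 := by
        field_simp
        rw [sq_abs]
    _ ≤ sin (x / 2) ^ 2 := by
        rw [← sq_abs (sin _), habs]
        exact pow_le_pow_left₀ (by positivity) jordan 2

theorem stmt10_general (θ h ξ : ℝ) (hθ0 : 0 ≤ θ) (hθ1 : θ ≤ 1) (hh0 : 0 < h)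
    (hξ1 : -(π / h) ≤ ξ) (hξ2 : ξ < π / h) :
    HasDerivAt (fun y : ℝ => -6 * θ / h ^ 3 * (Real.sin (h * y) - h * y) + (1 - θ) * y ^ 3)
      (12 * θ / h ^ 2 * Real.sin (h * ξ / 2) ^ 2 + 3 * (1 - θ) * ξ ^ 2) ξ ∧
    (12 / π ^ 2) * ξ ^ 2
      ≤ 12 * θ / h ^ 2 * Real.sin (h * ξ / 2) ^ 2 + 3 * (1 - θ) * ξ ^ 2 := by
  constructor
  · refine (((hasDerivAt_sin_mul_sub_mul h ξ).const_mul (-6 * θ / h ^ 3)).add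
      ((hasDerivAt_pow 3 ξ).const_mul (1 - θ))).congr_deriv ?_
    field_simp
    ring
  · have hhξ : |h * ξ| ≤ π := by
      rw [abs_le, ← le_div_iff₀' hh0, ← div_le_iff₀' hh0, neg_div]
      exact ⟨hξ1, hξ2.le⟩
    have toda : 12 * θ * ξ ^ 2 / π ^ 2 ≤ 12 * θ / h ^ 2 * sin (h * ξ / 2) ^ 2 :=
      calc 12 * θ * ξ ^ 2 / π ^ 2 = 12 * θ / h ^ 2 * ((h * ξ) ^ 2 / π ^ 2) := by
            field_simp
        _ ≤ _ := by gcongr; exact sq_div_pi_sq_le_sin_half_sq hhξ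
    have airy : 12 * (1 - θ) * ξ ^ 2 / π ^ 2 ≤ 3 * (1 - θ) * ξ ^ 2 := by
      have hπ : 4 ≤ π ^ 2 := by nlinarith [two_le_pi]
      rw [div_le_iff₀ (by positivity)]
      nlinarith [mul_nonneg (mul_nonneg (sub_nonneg.2 hθ1) (sq_nonneg ξ)) (sub_nonneg.2 hπ)]
    calc 12 / π ^ 2 * ξ ^ 2 = 12 * θ * ξ ^ 2 / π ^ 2 + 12 * (1 - θ) * ξ ^ 2 / π ^ 2 := by ring
      _ ≤ _ := add_le_add toda airy

/-- The interpolated Toda/Airy phase φ(ξ) = -6θh⁻³(sin(hξ)-hξ) + (1-θ)ξ³ has derivative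
    12θh⁻²sin²(hξ/2) + 3(1-θ)ξ², which is bounded below by (12/π²)ξ² on [-π/h, π/h). -/
theorem stmt10 (θ h ξ : ℝ) (hθ0 : 0 ≤ θ) (hθ1 : θ ≤ 1) (hh0 : 0 < h) (hh1 : h ≤ 1)
    (hξ1 : -(π / h) ≤ ξ) (hξ2 : ξ < π / h) :
    HasDerivAt (fun y : ℝ => -6 * θ / h ^ 3 * (Real.sin (h * y) - h * y) + (1 - θ) * y ^ 3)
      (12 * θ / h ^ 2 * Real.sin (h * ξ / 2) ^ 2 + 3 * (1 - θ) * ξ ^ 2) ξ ∧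
    (12 / π ^ 2) * ξ ^ 2
      ≤ 12 * θ / h ^ 2 * Real.sin (h * ξ / 2) ^ 2 + 3 * (1 - θ) * ξ ^ 2 :=
  stmt10_general θ h ξ hθ0 hθ1 hh0 hξ1 hξ2
end

section
/- Let 0 < h ≤ 1 and f^h ∈ H¹(hℤ). Define g^h on hℤ by g^h(λ) = h^{-2}(exp(h² f^h(λ)) - 1). Then g^h ∈ H¹(hℤ) and ‖g^h - f^h‖_{H¹(hℤ)} ≤ C h^{1/2} exp(‖f^h‖_{L²(hℤ)}) with C independent of h. -/
/-!
Write `g - f = φ(h² f) / h²` with `φ t = eᵗ - 1 - t = ∑_{k ≥ 2} tᵏ / k!`. Comparing the Taylor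
series termwise gives `φ t · M² ≤ t² φ M ≤ t² e^M` whenever `|t| ≤ M`. With `S = ‖f‖_{L²(hℤ)}`
every value satisfies `|h² f(λ)| ≤ h^{3/2} S ≤ S`, and summing the squared pointwise bound yields
`‖g - f‖²_{L²(hℤ)} ≤ h² e^{2S}`. The difference quotients cost a factor `4 / h²`, so
`‖g - f‖²_{H¹(hℤ)} ≤ (h³ + 4h) e^{2S} ≤ 5 h e^{2S}`.
-/

open Real
open scoped Nat

theorem hasSum_exp_sub_one_sub (x : ℝ) :
    HasSum (fun n : ℕ => x ^ (n + 2) / (n + 2)!) (exp x - 1 - x) := by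
  have h := NormedSpace.expSeries_div_hasSum_exp x
  rw [← exp_eq_exp_ℝ] at h
  simpa [Finset.sum_range_succ, sub_sub] using (hasSum_nat_add_iff' 2).mpr h

theorem exp_sub_one_sub_nonneg (t : ℝ) : 0 ≤ exp t - 1 - t := by
  linarith [add_one_le_exp t]

theorem exp_sub_one_sub_mul_sq_le {t M : ℝ} (ht : |t| ≤ M) :
    (exp t - 1 - t) * M ^ 2 ≤ t ^ 2 * (exp M - 1 - M) := by
  rw [← smul_eq_mul, ← smul_eq_mul (t ^ 2)]
  refine hasSum_le (fun n => ?_) ((hasSum_exp_sub_one_sub t).smul_const _)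
    ((hasSum_exp_sub_one_sub M).const_smul _)
  have htn : t ^ n ≤ M ^ n := (le_abs_self _).trans (by rw [abs_pow]; gcongr)
  have hterm : t ^ (n + 2) * M ^ 2 ≤ t ^ 2 * M ^ (n + 2) := by
    rw [pow_add, pow_add]
    nlinarith [mul_le_mul_of_nonneg_left htn (mul_nonneg (sq_nonneg t) (sq_nonneg M))]
  simp only [smul_eq_mul, div_mul_eq_mul_div, mul_div_assoc']
  gcongr

theorem sq_exp_sub_one_sub_le {t A M : ℝ} (hM : 0 < M) (htA : t ^ 2 ≤ A) (hAM : A ≤ M ^ 2) :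
    (exp t - 1 - t) ^ 2 ≤ A * exp M ^ 2 / M ^ 4 * t ^ 2 := by
  have ht : |t| ≤ M := abs_le_of_sq_le_sq (htA.trans hAM) hM.le
  have hφ : (exp t - 1 - t) * M ^ 2 ≤ t ^ 2 * exp M :=
    (exp_sub_one_sub_mul_sq_le ht).trans
      (mul_le_mul_of_nonneg_left (by linarith) (sq_nonneg t))
  have hsq : ((exp t - 1 - t) * M ^ 2) ^ 2 ≤ (t ^ 2 * exp M) ^ 2 :=
    pow_le_pow_left₀ (mul_nonneg (exp_sub_one_sub_nonneg t) (sq_nonneg M)) hφ 2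
  rw [div_mul_eq_mul_div, le_div_iff₀ (by positivity)]
  calc (exp t - 1 - t) ^ 2 * M ^ 4 = ((exp t - 1 - t) * M ^ 2) ^ 2 := by ring
    _ ≤ t ^ 2 * t ^ 2 * exp M ^ 2 := by linarith
    _ ≤ t ^ 2 * A * exp M ^ 2 := by gcongr
    _ = A * exp M ^ 2 * t ^ 2 := by ring

theorem summable_sq_exp_sub_one_sub_and_tsum_le {ι : Type*} {t : ι → ℝ} {A M : ℝ}
    (ht : Summable fun i => t i ^ 2) (hM : 0 < M) (htA : ∀ i, t i ^ 2 ≤ A) (hAM : A ≤ M ^ 2) :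
    Summable (fun i => (exp (t i) - 1 - t i) ^ 2) ∧
      ∑' i, (exp (t i) - 1 - t i) ^ 2 ≤ A * exp M ^ 2 / M ^ 4 * ∑' i, t i ^ 2 := by
  have hle i := sq_exp_sub_one_sub_le hM (htA i) hAM
  have hs := Summable.of_nonneg_of_le (fun i => sq_nonneg _) hle (ht.mul_left _)
  exact ⟨hs, (hs.tsum_le_tsum hle (ht.mul_left _)).trans_eq tsum_mul_left⟩

theorem summable_sq_exp_sub_one_div_sub_and_tsum_le {ι : Type*} {h : ℝ} {f : ι → ℝ} (hh0 : 0 < h)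
    (hh1 : h ≤ 1) (hf : Summable fun i => f i ^ 2) :
    Summable (fun i => ((exp (h ^ 2 * f i) - 1) / h ^ 2 - f i) ^ 2) ∧
      ∑' i, ((exp (h ^ 2 * f i) - 1) / h ^ 2 - f i) ^ 2
        ≤ h ^ 2 * exp (√(h * ∑' i, f i ^ 2)) ^ 2 := by
  set T := ∑' i, f i ^ 2
  have hfT i : f i ^ 2 ≤ T := hf.le_tsum i fun j _ => sq_nonneg (f j)
  have hrw : (fun i => ((exp (h ^ 2 * f i) - 1) / h ^ 2 - f i) ^ 2)
      = fun i => (exp (h ^ 2 * f i) - 1 - h ^ 2 * f i) ^ 2 / h ^ 4 := by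
    ext i; field_simp
  have hT0 : 0 ≤ T := tsum_nonneg fun i => sq_nonneg (f i)
  rcases hT0.eq_or_lt with hT | hT
  · have hf0 i : f i = 0 := by simpa using (hfT i).trans hT.ge
    simp [hf0]
    positivity
  set S := √(h * T)
  have hS : 0 < S := sqrt_pos.mpr (by positivity)
  have hS2 : S ^ 2 = h * T := sq_sqrt (by positivity)
  have hsq : Summable fun i => (h ^ 2 * f i) ^ 2 := (hf.mul_left (h ^ 4)).congr fun i => by ring
  have hsq_tsum : ∑' i, (h ^ 2 * f i) ^ 2 = h ^ 4 * T := by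
    rw [← tsum_mul_left]; exact tsum_congr fun i => by ring
  have hAS : h ^ 4 * T ≤ S ^ 2 := by
    rw [hS2, show h ^ 4 * T = h ^ 3 * (h * T) by ring]
    exact mul_le_of_le_one_left (by positivity) (pow_le_one₀ hh0.le hh1)
  obtain ⟨hs, hle⟩ := summable_sq_exp_sub_one_sub_and_tsum_le hsq hS
    (A := h ^ 4 * T) (fun i => by rw [mul_pow, ← pow_mul]; gcongr; exact hfT i) hAS
  rw [hrw]
  refine ⟨hs.div_const _, ?_⟩
  rw [tsum_div_const, div_le_iff₀ (by positivity)]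
  calc ∑' i, (exp (h ^ 2 * f i) - 1 - h ^ 2 * f i) ^ 2
      ≤ h ^ 4 * T * exp S ^ 2 / S ^ 4 * ∑' i, (h ^ 2 * f i) ^ 2 := hle
    _ = h ^ 2 * exp S ^ 2 * h ^ 4 := by
      rw [hsq_tsum, show S ^ 4 = (S ^ 2) ^ 2 by ring, hS2]
      field_simp

theorem sq_sub_le_two_mul_add (a b : ℝ) : (a - b) ^ 2 ≤ 2 * a ^ 2 + 2 * b ^ 2 := by
  nlinarith [sq_nonneg (a + b)]

section Shift

variable {G : Type*} [AddGroup G] {u : G → ℝ}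

theorem summable_sq_sub_shift (hu : Summable fun n => u n ^ 2) (a : G) :
    Summable fun n => (u (n + a) - u n) ^ 2 := by
  have hua : Summable fun n => u (n + a) ^ 2 := hu.comp_injective (add_left_injective a)
  exact .of_nonneg_of_le (fun n => sq_nonneg _) (fun n => sq_sub_le_two_mul_add _ _)
    ((hua.mul_left 2).add (hu.mul_left 2))

theorem tsum_sq_sub_shift_le (hu : Summable fun n => u n ^ 2) (a : G) :
    ∑' n, (u (n + a) - u n) ^ 2 ≤ 4 * ∑' n, u n ^ 2 := by
  have hua : Summable fun n => u (n + a) ^ 2 := hu.comp_injective (add_left_injective a)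
  calc ∑' n, (u (n + a) - u n) ^ 2 ≤ ∑' n, (2 * u (n + a) ^ 2 + 2 * u n ^ 2) :=
        (summable_sq_sub_shift hu a).tsum_le_tsum (fun n => sq_sub_le_two_mul_add _ _)
          ((hua.mul_left 2).add (hu.mul_left 2))
    _ = 4 * ∑' n, u n ^ 2 := by
        have hshift : ∑' n, u (n + a) ^ 2 = ∑' n, u n ^ 2 :=
          (Equiv.addRight a).tsum_eq fun n => u n ^ 2
        rw [(hua.mul_left 2).tsum_add (hu.mul_left 2), tsum_mul_left, tsum_mul_left, hshift]
        ring

end Shift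

/-- For f ∈ H¹(hℤ), the function g(λ) = h⁻²(exp(h²f(λ)) - 1) is in H¹(hℤ) and
    ‖g - f‖_{H¹(hℤ)} ≤ C h^{1/2} exp(‖f‖_{L²(hℤ)}), with C independent of h. -/
theorem stmt12 : ∃ C > 0, ∀ (h : ℝ), 0 < h → h ≤ 1 → ∀ f : ℤ → ℝ,
    Summable (fun n => (f n) ^ 2) →
    Summable (fun n => (f (n + 1) - f n) ^ 2) →
    (Summable (fun n => ((Real.exp (h ^ 2 * f n) - 1) / h ^ 2) ^ 2) ∧
     Summable (fun n => ((Real.exp (h ^ 2 * f (n + 1)) - 1) / h ^ 2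
        - (Real.exp (h ^ 2 * f n) - 1) / h ^ 2) ^ 2) ∧
     Real.sqrt (h * (∑' n : ℤ, ((Real.exp (h ^ 2 * f n) - 1) / h ^ 2 - f n) ^ 2)
        + (1 / h) * ∑' n : ℤ,
            (((Real.exp (h ^ 2 * f (n + 1)) - 1) / h ^ 2 - f (n + 1))
              - ((Real.exp (h ^ 2 * f n) - 1) / h ^ 2 - f n)) ^ 2)
      ≤ C * Real.sqrt h * Real.exp (Real.sqrt (h * ∑' n : ℤ, (f n) ^ 2))) := by
  refine ⟨3, by norm_num, fun h hh0 hh1 f hf _ => ?_⟩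
  set d := fun n => (exp (h ^ 2 * f n) - 1) / h ^ 2 - f n
  set E := exp (√(h * ∑' n, f n ^ 2))
  obtain ⟨hd, hdE⟩ := summable_sq_exp_sub_one_div_sub_and_tsum_le hh0 hh1 hf
  have hg : Summable fun n => ((exp (h ^ 2 * f n) - 1) / h ^ 2) ^ 2 :=
    .of_nonneg_of_le (fun n => sq_nonneg _)
      (fun n => by simpa [d] using sq_sub_le_two_mul_add (d n) (-f n))
      ((hd.mul_left 2).add (hf.mul_left 2))
  refine ⟨hg, summable_sq_sub_shift hg 1, ?_⟩
  rw [sqrt_le_left (by positivity), mul_pow, mul_pow, sq_sqrt hh0.le]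
  calc h * ∑' n, d n ^ 2 + 1 / h * ∑' n, (d (n + 1) - d n) ^ 2
      ≤ h * ∑' n, d n ^ 2 + 1 / h * (4 * ∑' n, d n ^ 2) := by
        gcongr; exact tsum_sq_sub_shift_le hd 1
    _ = (h + 4 / h) * ∑' n, d n ^ 2 := by ring
    _ ≤ (h + 4 / h) * (h ^ 2 * E ^ 2) := by gcongr
    _ = (h ^ 2 + 4) * h * E ^ 2 := by field_simp
    _ ≤ 3 ^ 2 * h * E ^ 2 := by gcongr; nlinarith
end
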